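/- Let 𝓐=(A,δ^A,σ^A,τ^A) be a fuzzy automaton over a complete residuated lattice 𝓛 and alphabet X, and let E be the greatest forward bisimulation fuzzy equivalence relation on 𝓐. Then the factor fuzzy automaton 𝓐/E is a minimal fuzzy automaton in the class of all fuzzy automata UFB-equivalent to 𝓐: 𝓐/E is UFB-equivalent to 𝓐, and for every fuzzy automaton 𝓑 that is UFB-equivalent to 𝓐, the cardinality of the state set of 𝓐/E is at most the cardinality of the state set of 𝓑. -/
import Mathlib


universe u

/-- A complete residuated lattice: a complete lattice with a commutative monoid
structure whose unit is the top element, together with a residuum operation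
forming an adjoint pair with the multiplication. -/
class CompleteResiduatedLattice (L : Type*) extends CompleteLattice L, CommMonoid L where
  /-- the residuum operation `→` -/
  res : L → L → L
  /-- the adjunction property -/
  adjunction : ∀ x y z : L, x * y ≤ z ↔ x ≤ res y z
  /-- the multiplicative unit `1` is the greatest element -/
  one_eq_top : (1 : L) = ⊤

namespace FuzzyAutomataBisim

/-- A fuzzy automaton over `L` and alphabet `X`, with state set `A`. -/
structure FuzzyAutomaton (L : Type*) [CompleteResiduatedLattice L] (X A : Type*) where
  δ : A → X → A → L
  σ : A → L
  τ : A → L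

variable {L X A B C : Type*} [CompleteResiduatedLattice L]

/-- biresiduum `x ↔ y = (x → y) ⊓ (y → x)` -/
def bires (x y : L) : L :=
  CompleteResiduatedLattice.res x y ⊓ CompleteResiduatedLattice.res y x

/-- inverse of a fuzzy relation -/
def inv (φ : A → B → L) : B → A → L := fun b a => φ a b

/-- composition of fuzzy relations -/
def rcomp (φ : A → B → L) (ψ : B → C → L) : A → C → L := fun a c => ⨆ b, φ a b * ψ b c

/-- composition of a fuzzy set with a fuzzy relation -/
def scomp (f : A → L) (φ : A → B → L) : B → L := fun b => ⨆ a, f a * φ a b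

/-- composition of a fuzzy relation with a fuzzy set -/
def rscomp (φ : A → B → L) (g : B → L) : A → L := fun a => ⨆ b, φ a b * g b

/-- degree of overlapping of two fuzzy sets -/
def sdot (f g : A → L) : L := ⨆ a, f a * g a

/-- kernel `E_A^φ` of a fuzzy relation -/
def ker (φ : A → B → L) : A → A → L := fun a₁ a₂ => ⨅ b, bires (φ a₁ b) (φ a₂ b)

/-- co-kernel `E_B^φ` of a fuzzy relation -/
def coker (φ : A → B → L) : B → B → L := fun b₁ b₂ => ⨅ a, bires (φ a b₁) (φ a b₂)

/-- `φ` is an `L`-function -/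
def IsLFun (φ : A → B → L) : Prop := ∀ a, ∃ b, φ a b = 1

/-- `φ` is surjective, i.e. `φ⁻¹` is an `L`-function -/
def IsSurj (φ : A → B → L) : Prop := ∀ b, ∃ a, φ a b = 1

/-- `φ` is a partial fuzzy function: `φ ∘ φ⁻¹ ∘ φ ≤ φ` -/
def IsPFF (φ : A → B → L) : Prop := rcomp (rcomp φ (inv φ)) φ ≤ φ

/-- `φ` is a uniform fuzzy relation: a partial fuzzy function that is a
surjective `L`-function -/
def IsUniform (φ : A → B → L) : Prop := IsPFF φ ∧ IsLFun φ ∧ IsSurj φ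

/-- the set of crisp descriptions of `φ` -/
def CR (φ : A → B → L) : Set (A → B) := {ψ | ∀ a, φ a (ψ a) = 1}

/-- `ψ : A → B` is `F`-surjective -/
def SurjMod (F : B → B → L) (ψ : A → B) : Prop := ∀ b, ∃ a, F (ψ a) b = 1

/-- fuzzy equivalence relation -/
structure IsFuzzyEquiv (E : A → A → L) : Prop where
  refl : ∀ a, E a a = 1
  symm : ∀ a b, E a b = E b a
  trans : ∀ a b c, E a b * E b c ≤ E a c

/-- fuzzy equality -/
def IsFuzzyEquality (E : A → A → L) : Prop :=
  IsFuzzyEquiv E ∧ ∀ a b, E a b = 1 → a = b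

/-- the factor set `A/E = {E_a : a ∈ A}` -/
abbrev FactorSet (E : A → A → L) := {f : A → L // ∃ a, E a = f}

/-- the class `E_a` as an element of `A/E` -/
def toClass (E : A → A → L) (a : A) : FactorSet E := ⟨E a, a, rfl⟩

/-- a chosen representative of a class -/
noncomputable def rep {E : A → A → L} (c : FactorSet E) : A := c.2.choose

/-- the fuzzy relation `Ẽ` on `A/E` -/
noncomputable def tildeRel (E : A → A → L) : FactorSet E → FactorSet E → L :=
  fun c c' => E (rep c) (rep c')

open Classical in
/-- a chosen crisp description of `φ` -/
noncomputable def crispDesc [Nonempty B] (φ : A → B → L) : A → B :=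
  fun a => if h : ∃ b, φ a b = 1 then h.choose else Classical.arbitrary B

/-- the induced map `φ̃ : A/E_A^φ → B/E_B^φ`, `φ̃(E_a) = F_{ψ(a)}` -/
noncomputable def tilde [Nonempty B] (φ : A → B → L) :
    FactorSet (ker φ) → FactorSet (coker φ) :=
  fun c => toClass (coker φ) (crispDesc φ (rep c))

/-- the fuzzy transition relation `δ_x` -/
def FuzzyAutomaton.δx (M : FuzzyAutomaton L X A) (x : X) : A → A → L := fun a b => M.δ a x b

open Classical in
/-- transitions extended to words -/
noncomputable def deltaWord (M : FuzzyAutomaton L X A) : List X → A → A → L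
  | [] => fun a b => if a = b then (1 : L) else ⊥
  | x :: u => rcomp (M.δx x) (deltaWord M u)

/-- the fuzzy language recognized by `M` : `L(M)(u) = σ ∘ δ_u ∘ τ` -/
noncomputable def lang (M : FuzzyAutomaton L X A) (u : List X) : L :=
  sdot (scomp M.σ (deltaWord M u)) M.τ

/-- forward simulation -/
def IsForwardSim (MA : FuzzyAutomaton L X A) (MB : FuzzyAutomaton L X B)
    (φ : A → B → L) : Prop :=
  MA.σ ≤ scomp MB.σ (inv φ) ∧
  (∀ x, rcomp (inv φ) (MA.δx x) ≤ rcomp (MB.δx x) (inv φ)) ∧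
  rscomp (inv φ) MA.τ ≤ MB.τ

/-- backward simulation -/
def IsBackwardSim (MA : FuzzyAutomaton L X A) (MB : FuzzyAutomaton L X B)
    (φ : A → B → L) : Prop :=
  scomp MA.σ φ ≤ MB.σ ∧
  (∀ x, rcomp (MA.δx x) φ ≤ rcomp φ (MB.δx x)) ∧
  MA.τ ≤ rscomp φ MB.τ

/-- forward bisimulation -/
def IsForwardBisim (MA : FuzzyAutomaton L X A) (MB : FuzzyAutomaton L X B)
    (φ : A → B → L) : Prop :=
  IsForwardSim MA MB φ ∧ IsForwardSim MB MA (inv φ)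

/-- backward bisimulation -/
def IsBackwardBisim (MA : FuzzyAutomaton L X A) (MB : FuzzyAutomaton L X B)
    (φ : A → B → L) : Prop :=
  IsBackwardSim MA MB φ ∧ IsBackwardSim MB MA (inv φ)

/-- backward-forward bisimulation -/
def IsBFBisim (MA : FuzzyAutomaton L X A) (MB : FuzzyAutomaton L X B)
    (φ : A → B → L) : Prop :=
  IsBackwardSim MA MB φ ∧ IsForwardSim MB MA (inv φ)

/-- forward-backward bisimulation -/
def IsFBBisim (MA : FuzzyAutomaton L X A) (MB : FuzzyAutomaton L X B)
    (φ : A → B → L) : Prop :=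
  IsForwardSim MA MB φ ∧ IsBackwardSim MB MA (inv φ)

/-- isomorphism of fuzzy automata -/
def IsIso (MA : FuzzyAutomaton L X A) (MB : FuzzyAutomaton L X B) (h : A → B) : Prop :=
  Function.Bijective h ∧
  (∀ (a₁ : A) (x : X) (a₂ : A), MA.δ a₁ x a₂ = MB.δ (h a₁) x (h a₂)) ∧
  (∀ a, MA.σ a = MB.σ (h a)) ∧
  (∀ a, MA.τ a = MB.τ (h a))

/-- the factor fuzzy automaton `𝓐/E` -/
noncomputable def factorAut (M : FuzzyAutomaton L X A) (E : A → A → L) :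
    FuzzyAutomaton L X (FactorSet E) where
  δ := fun c x c' => rcomp (rcomp E (M.δx x)) E (rep c) (rep c')
  σ := fun c => scomp M.σ E (rep c)
  τ := fun c => rscomp E M.τ (rep c)

/-- the natural fuzzy relation `φ(a₁, E_{a₂}) = E(a₁,a₂)` between `A` and `A/E` -/
def natRel (E : A → A → L) : A → FactorSet E → L := fun a c => c.1 a

/-- the fuzzy relation `G/E` on `A/E` -/
noncomputable def quotRel (E G : A → A → L) : FactorSet E → FactorSet E → L :=
  fun c c' => G (rep c) (rep c')

/-- the fuzzy relation `φ(a₁, E_{a₂}) = G(a₁,a₂)` between `A` and `A/E` -/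
noncomputable def quotNatRel (E G : A → A → L) : A → FactorSet E → L :=
  fun a c => G a (rep c)

/-- UFB-equivalence of fuzzy automata -/
def UFBEquiv (MA : FuzzyAutomaton L X A) (MB : FuzzyAutomaton L X B) : Prop :=
  ∃ φ : A → B → L, IsUniform φ ∧ IsForwardBisim MA MB φ


section ProofHelpers

set_option linter.unusedSectionVars false

lemma cr_le_one (x : L) : x ≤ 1 := CompleteResiduatedLattice.one_eq_top (L := L) ▸ le_top

lemma cr_eq_one {x : L} (h : (1:L) ≤ x) : x = 1 := le_antisymm (cr_le_one x) h

lemma cr_mul_le_mul {a b c d : L} (h1 : a ≤ b) (h2 : c ≤ d) : a * c ≤ b * d := by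
  have key : ∀ x y z : L, x ≤ y → x * z ≤ y * z := fun x y z hxy =>
    (CompleteResiduatedLattice.adjunction x z (y*z)).2
      (hxy.trans ((CompleteResiduatedLattice.adjunction y z (y*z)).1 le_rfl))
  calc a * c ≤ b * c := key a b c h1
    _ = c * b := mul_comm b c
    _ ≤ d * b := key c d b h2
    _ = b * d := mul_comm d b

lemma cr_iSup_mul {ι : Sort*} (f : ι → L) (x : L) : (⨆ i, f i) * x = ⨆ i, f i * x := by
  refine le_antisymm ?_ (iSup_le fun i => cr_mul_le_mul (le_iSup f i) le_rfl)
  rw [CompleteResiduatedLattice.adjunction]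
  exact iSup_le fun i =>
    (CompleteResiduatedLattice.adjunction _ _ _).1 (le_iSup (fun i => f i * x) i)

lemma cr_mul_iSup {ι : Sort*} (x : L) (f : ι → L) : (x * ⨆ i, f i) = ⨆ i, x * f i := by
  rw [mul_comm, cr_iSup_mul]
  exact iSup_congr fun i => mul_comm _ _

lemma rcomp_assoc {D : Type*} (φ : A → B → L) (ψ : B → C → L) (χ : C → D → L) :
    rcomp (rcomp φ ψ) χ = rcomp φ (rcomp ψ χ) := by
  funext a d
  simp only [rcomp, cr_iSup_mul, cr_mul_iSup, mul_assoc]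
  exact iSup_comm

lemma rcomp_mono {φ φ' : A → B → L} {ψ ψ' : B → C → L} (h1 : φ ≤ φ') (h2 : ψ ≤ ψ') :
    rcomp φ ψ ≤ rcomp φ' ψ' := fun a c => iSup_mono fun b => cr_mul_le_mul (h1 a b) (h2 b c)

lemma rscomp_rcomp (φ : A → B → L) (ψ : B → C → L) (g : C → L) :
    rscomp (rcomp φ ψ) g = rscomp φ (rscomp ψ g) := by
  funext a
  simp only [rscomp, rcomp, cr_iSup_mul, cr_mul_iSup, mul_assoc]
  exact iSup_comm

lemma rscomp_mono {φ φ' : A → B → L} {g g' : B → L} (h1 : φ ≤ φ') (h2 : g ≤ g') :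
    rscomp φ g ≤ rscomp φ' g' := fun a => iSup_mono fun b => cr_mul_le_mul (h1 a b) (h2 b)

lemma E_rep {E : A → A → L} (c : FactorSet E) : E (rep c) = c.1 := c.2.choose_spec

lemma rep_toClass_one {E : A → A → L} (hEq : IsFuzzyEquiv E) (a : A) :
    E (rep (toClass E a)) a = 1 := by
  rw [E_rep (toClass E a)]
  exact hEq.refl a

lemma E_two {E : A → A → L} (hEq : IsFuzzyEquiv E) (x a b : A) :
    E x a * E x b ≤ E a b := by
  rw [hEq.symm x a]
  exact hEq.trans a x b

lemma E_eq_of_one {E : A → A → L} (hEq : IsFuzzyEquiv E) {a a' : A}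
    (h : E a a' = 1) : E a = E a' := by
  funext x
  refine le_antisymm ?_ ?_
  · calc E a x = 1 * E a x := (one_mul _).symm
      _ = E a' a * E a x := by rw [hEq.symm a' a, h]
      _ ≤ E a' x := hEq.trans a' a x
  · calc E a' x = 1 * E a' x := (one_mul _).symm
      _ = E a a' * E a' x := by rw [h]
      _ ≤ E a x := hEq.trans a a' x

end ProofHelpers

/-- the factor automaton by the greatest forward bisimulation
fuzzy equivalence relation is minimal in the UFB-equivalence class -/
theorem factor_minimal {L X A : Type u} [CompleteResiduatedLattice L] [Nonempty A]
    (MA : FuzzyAutomaton L X A) (E : A → A → L)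
    (hEq : IsFuzzyEquiv E) (hFB : IsForwardBisim MA MA E)
    (hGr : ∀ R : A → A → L, IsForwardBisim MA MA R → R ≤ E) :
    UFBEquiv (factorAut MA E) MA ∧
    ∀ (B : Type u) (_ : Nonempty B) (MB : FuzzyAutomaton L X B),
      UFBEquiv MA MB → Cardinal.mk (FactorSet E) ≤ Cardinal.mk B := by
  obtain ⟨hsim, hsim'⟩ := hFB
  have invE : inv E = E := funext fun a => funext fun b => hEq.symm b a
  have hσE : MA.σ ≤ scomp MA.σ E := invE ▸ hsim.1
  have hδE : ∀ x, rcomp E (MA.δx x) ≤ rcomp (MA.δx x) E := fun x => by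
    have h := hsim.2.1 x; rwa [invE] at h
  have hτE : rscomp E MA.τ ≤ MA.τ := by
    have h := hsim.2.2; rwa [invE] at h
  constructor
  · refine ⟨fun c a => E (rep c) a, ⟨?_, ?_, ?_⟩, ⟨?_, ?_, ?_⟩, ⟨?_, ?_, ?_⟩⟩
    · -- partial fuzzy function
      intro c a
      show (⨆ c', (⨆ a', E (rep c) a' * E (rep c') a') * E (rep c') a) ≤ E (rep c) a
      simp only [cr_iSup_mul]
      refine iSup_le fun c' => iSup_le fun a' => ?_
      calc E (rep c) a' * E (rep c') a' * E (rep c') a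
          = E (rep c) a' * E a' (rep c') * E (rep c') a := by rw [hEq.symm (rep c') a']
        _ ≤ E (rep c) (rep c') * E (rep c') a :=
            cr_mul_le_mul (hEq.trans _ _ _) le_rfl
        _ ≤ E (rep c) a := hEq.trans _ _ _
    · -- L-function
      exact fun c => ⟨rep c, hEq.refl (rep c)⟩
    · -- surjective
      exact fun a => ⟨toClass E a, rep_toClass_one hEq a⟩
    · -- fsim (i)
      intro c
      show (⨆ a, MA.σ a * E a (rep c)) ≤ ⨆ a, MA.σ a * E (rep c) a
      exact le_of_eq (iSup_congr fun a => by rw [hEq.symm a (rep c)])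
    · -- fsim (ii)
      intro x a c'
      show (⨆ c, E (rep c) a * ⨆ b', (⨆ a', E (rep c) a' * MA.δx x a' b') * E b' (rep c'))
          ≤ ⨆ b, MA.δx x a b * E (rep c') b
      simp only [cr_iSup_mul, cr_mul_iSup]
      refine iSup_le fun c => iSup_le fun b' => iSup_le fun a' => ?_
      calc E (rep c) a * (E (rep c) a' * MA.δx x a' b' * E b' (rep c'))
          = (E (rep c) a * E (rep c) a') * (MA.δx x a' b' * E b' (rep c')) := by
            rw [mul_assoc (E (rep c) a'), ← mul_assoc]
        _ ≤ E a a' * (MA.δx x a' b' * E b' (rep c')) :=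
            cr_mul_le_mul (E_two hEq _ _ _) le_rfl
        _ = (E a a' * MA.δx x a' b') * E b' (rep c') := (mul_assoc _ _ _).symm
        _ ≤ (⨆ a'', E a a'' * MA.δx x a'' b') * E b' (rep c') :=
            cr_mul_le_mul (le_iSup (fun a'' => E a a'' * MA.δx x a'' b') a') le_rfl
        _ ≤ (⨆ b, MA.δx x a b * E b b') * E b' (rep c') :=
            cr_mul_le_mul (hδE x a b') le_rfl
        _ = ⨆ b, MA.δx x a b * E b b' * E b' (rep c') := cr_iSup_mul _ _
        _ ≤ ⨆ b, MA.δx x a b * E (rep c') b := iSup_mono fun b => by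
            rw [mul_assoc, hEq.symm (rep c') b]
            exact cr_mul_le_mul le_rfl (hEq.trans b b' (rep c'))
    · -- fsim (iii)
      intro a
      show (⨆ c, E (rep c) a * ⨆ b, E (rep c) b * MA.τ b) ≤ MA.τ a
      simp only [cr_mul_iSup]
      refine iSup_le fun c => iSup_le fun b => ?_
      calc E (rep c) a * (E (rep c) b * MA.τ b)
          = (E (rep c) a * E (rep c) b) * MA.τ b := (mul_assoc _ _ _).symm
        _ ≤ E a b * MA.τ b := cr_mul_le_mul (E_two hEq _ _ _) le_rfl
        _ ≤ rscomp E MA.τ a := le_iSup (fun b => E a b * MA.τ b) b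
        _ ≤ MA.τ a := hτE a
    · -- bsim (i)
      intro a
      show MA.σ a ≤ ⨆ c, (⨆ b, MA.σ b * E b (rep c)) * E (rep c) a
      refine le_trans ?_
        (le_iSup (fun c => (⨆ b, MA.σ b * E b (rep c)) * E (rep c) a) (toClass E a))
      have e1 : E (rep (toClass E a)) a = 1 := rep_toClass_one hEq a
      have e2 : E a (rep (toClass E a)) = 1 := by rw [hEq.symm]; exact e1
      calc MA.σ a = MA.σ a * 1 := (mul_one _).symm
        _ ≤ (⨆ b, MA.σ b * E b (rep (toClass E a))) * E (rep (toClass E a)) a := by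
            rw [e1]
            refine cr_mul_le_mul ?_ le_rfl
            refine le_trans ?_ (le_iSup (fun b => MA.σ b * E b (rep (toClass E a))) a)
            rw [e2, mul_one]
    · -- bsim (ii)
      intro x c a'
      show (⨆ a, E (rep c) a * MA.δx x a a')
          ≤ ⨆ c', (⨆ b', (⨆ a, E (rep c) a * MA.δx x a b') * E b' (rep c')) * E (rep c') a'
      refine le_trans ?_
        (le_iSup (fun c' => (⨆ b', (⨆ a, E (rep c) a * MA.δx x a b') * E b' (rep c')) *
          E (rep c') a') (toClass E a'))
      have e1 : E (rep (toClass E a')) a' = 1 := rep_toClass_one hEq a'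
      have e2 : E a' (rep (toClass E a')) = 1 := by rw [hEq.symm]; exact e1
      calc (⨆ a, E (rep c) a * MA.δx x a a')
          = ((⨆ a, E (rep c) a * MA.δx x a a') * E a' (rep (toClass E a'))) *
              E (rep (toClass E a')) a' := by rw [e1, e2, mul_one, mul_one]
        _ ≤ (⨆ b', (⨆ a, E (rep c) a * MA.δx x a b') * E b' (rep (toClass E a'))) *
              E (rep (toClass E a')) a' :=
            cr_mul_le_mul (le_iSup (fun b' => (⨆ a, E (rep c) a * MA.δx x a b') *
              E b' (rep (toClass E a'))) a') le_rfl
    · -- bsim (iii)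
      exact le_refl _
  · rintro B _hB MB ⟨φ, ⟨-, hL, hS⟩, hfs, hbs⟩
    -- F := φ ∘ φ⁻¹ is a forward bisimulation on MA
    have hFsymm : inv (rcomp φ (inv φ)) = rcomp φ (inv φ) :=
      funext fun a => funext fun a' => iSup_congr fun b => mul_comm (φ a' b) (φ a b)
    have hFrefl : ∀ a, (1:L) ≤ rcomp φ (inv φ) a a := fun a => by
      obtain ⟨b, hb⟩ := hL a
      calc (1:L) = φ a b * φ a b := by rw [hb, mul_one]
        _ ≤ _ := le_iSup (fun b => φ a b * φ a b) b
    have hFsim : IsForwardSim MA MA (rcomp φ (inv φ)) := by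
      refine ⟨?_, ?_, ?_⟩
      · intro a
        refine le_trans ?_ (le_iSup (fun a' => MA.σ a' * inv (rcomp φ (inv φ)) a' a) a)
        calc MA.σ a = MA.σ a * 1 := (mul_one _).symm
          _ ≤ MA.σ a * rcomp φ (inv φ) a a := cr_mul_le_mul le_rfl (hFrefl a)
      · intro x
        rw [hFsymm]
        calc rcomp (rcomp φ (inv φ)) (MA.δx x)
            = rcomp φ (rcomp (inv φ) (MA.δx x)) := rcomp_assoc _ _ _
          _ ≤ rcomp φ (rcomp (MB.δx x) (inv φ)) := rcomp_mono le_rfl (hfs.2.1 x)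
          _ = rcomp (rcomp φ (MB.δx x)) (inv φ) := (rcomp_assoc _ _ _).symm
          _ ≤ rcomp (rcomp (MA.δx x) φ) (inv φ) := rcomp_mono (hbs.2.1 x) le_rfl
          _ = rcomp (MA.δx x) (rcomp φ (inv φ)) := rcomp_assoc _ _ _
      · rw [hFsymm]
        calc rscomp (rcomp φ (inv φ)) MA.τ
            = rscomp φ (rscomp (inv φ) MA.τ) := rscomp_rcomp _ _ _
          _ ≤ rscomp φ MB.τ := rscomp_mono le_rfl hfs.2.2
          _ ≤ MA.τ := hbs.2.2
    have hFE : rcomp φ (inv φ) ≤ E := hGr _ ⟨hFsim, by rw [hFsymm]; exact hFsim⟩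
    have hsurj : Function.Surjective (fun b : B => toClass E ((hS b).choose)) := by
      intro c
      obtain ⟨b, hb⟩ := hL (rep c)
      refine ⟨b, ?_⟩
      have hb' : φ ((hS b).choose) b = 1 := (hS b).choose_spec
      have h1 : (1:L) ≤ rcomp φ (inv φ) ((hS b).choose) (rep c) := by
        calc (1:L) = φ ((hS b).choose) b * φ (rep c) b := by rw [hb, hb', mul_one]
          _ ≤ rcomp φ (inv φ) ((hS b).choose) (rep c) :=
              le_iSup (fun b' => φ ((hS b).choose) b' * φ (rep c) b') b
      have hE1 : E ((hS b).choose) (rep c) = 1 :=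
        cr_eq_one (le_trans h1 (hFE _ _))
      apply Subtype.ext
      show E ((hS b).choose) = c.1
      exact (E_eq_of_one hEq hE1).trans (E_rep c)
    exact Cardinal.mk_le_of_surjective hsurj

end FuzzyAutomataBisim
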